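/- Pythagorean theorem for pseudo-determinants: Let A be a real symmetric n×n matrix of rank k. Then the square of the coefficient of x^{n−k} in the characteristic polynomial det(x·I − A) equals Σ_{(I,J)} det(A_{I,J})², the sum running over all pairs (I,J) of k-element subsets of {1,…,n}. (The left-hand side is Det(A)², the square of the product of the k nonzero eigenvalues of A.) -/

import Mathlib

/-!
Cauchy–Binet writes `∑_J det(A_{I,J})²` as the principal minor `det((A Aᵀ)_{I,I})`, so the
right-hand side is the sum of the principal `k × k` minors of `A Aᵀ = A²`, which is `(-1)^k` times
the coefficient of `x^{n-k}` in the characteristic polynomial of `A²`. Diagonalising `A`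
orthogonally, the characteristic polynomials of `A` and `A²` are `∏ (x - λᵢ)` and `∏ (x - λᵢ²)`.
Exactly `k` of the `λᵢ` are nonzero, and in `∏ (x - μᵢ)` with exactly `k` nonzero roots the
coefficient of `x^{n-k}` is `∏_{μᵢ ≠ 0} (-μᵢ)`; comparing these products for `μ = λ` and `μ = λ²`
gives the identity.
-/

open Matrix

/-- The minor of a real `n × n` matrix `A` given by `k`-element sets `I` of row indices and
`J` of column indices. For `k = 0` it equals `1`. -/
def Matrix.minorOn {n k : ℕ} (A : Matrix (Fin n) (Fin n) ℝ)
    (I : {s : Finset (Fin n) // s.card = k}) (J : {s : Finset (Fin n) // s.card = k}) : ℝ :=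
  (A.submatrix (I.1.orderEmbOfFin I.2) (J.1.orderEmbOfFin J.2)).det

open Finset Polynomial

theorem Finset.sum_injective_eq_sum_orderEmbOfFin_comp_perm {n M : Type*} [Fintype n]
    [LinearOrder n] [AddCommMonoid M] {k : ℕ} (g : (Fin k → n) → M) :
    ∑ f : Fin k → n with Function.Injective f, g f =
      ∑ S : {s : Finset n // s.card = k}, ∑ σ : Equiv.Perm (Fin k),
        g (S.1.orderEmbOfFin S.2 ∘ σ) := by
  rw [← Fintype.sum_prod_type']
  symm
  refine sum_nbij (fun p => p.1.1.orderEmbOfFin p.1.2 ∘ p.2) ?_ ?_ ?_ fun _ _ => rfl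
  · intro p _
    simpa using (p.1.1.orderEmbOfFin p.1.2).injective.comp p.2.injective
  · rintro ⟨⟨S, hS⟩, σ⟩ - ⟨⟨T, hT⟩, τ⟩ - h
    have hST : S = T := by
      simpa [Set.range_comp] using congrArg Set.range h
    subst hST
    simp only [Prod.mk.injEq, true_and]
    ext i
    exact congrArg Fin.val ((S.orderEmbOfFin hS).injective (congrFun h i))
  · intro f hf
    simp only [coe_filter, mem_univ, true_and, Set.mem_ofPred_eq] at hf
    set S := univ.image f
    have hS : S.card = k := by simp [S, card_image_of_injective _ hf]
    let σ : Fin k → Fin k := fun i => (S.orderIsoOfFin hS).symm ⟨f i, by simp [S]⟩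
    have hσ : σ.Injective := fun i j h => hf (by simpa [σ] using h)
    refine ⟨(⟨S, hS⟩, Equiv.ofBijective σ hσ.bijective_of_finite), by simp, ?_⟩
    funext i
    simp [σ, ← coe_orderIsoOfFin_apply]

theorem Polynomial.coeff_card_zeros_prod_X_sub_C {R ι : Type*} [CommRing R] [Fintype ι]
    [DecidableEq R] (d : ι → R) :
    (∏ i, (X - C (d i))).coeff #{i | d i = 0} = ∏ i with d i ≠ 0, -d i := by
  have hprod_zeros : ∏ i with d i = 0, (X - C (d i)) = X ^ #{i | d i = 0} := by
    rw [prod_congr rfl fun i hi => by rw [(mem_filter.1 hi).2, C_0, sub_zero], prod_const]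
  rw [← prod_filter_mul_prod_filter_not univ (fun i => d i = 0), hprod_zeros,
    coeff_X_pow_mul', if_pos le_rfl, Nat.sub_self, coeff_zero_eq_eval_zero, eval_prod]
  simp only [eval_sub, eval_X, eval_C, zero_sub]

theorem Polynomial.sq_coeff_card_zeros_prod_X_sub_C {R ι : Type*} [CommRing R]
    [NoZeroDivisors R] [Fintype ι] [DecidableEq R] (d : ι → R) :
    ((∏ i, (X - C (d i))).coeff #{i | d i = 0}) ^ 2 =
      (-1) ^ #{i | d i ≠ 0} * (∏ i, (X - C (d i ^ 2))).coeff #{i | d i = 0} := by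
  have hsq_zeros : #{i | d i ^ 2 = 0} = #{i | d i = 0} := by
    simp only [pow_eq_zero_iff two_ne_zero]
  rw [coeff_card_zeros_prod_X_sub_C, ← hsq_zeros, coeff_card_zeros_prod_X_sub_C]
  simp only [ne_eq, pow_eq_zero_iff two_ne_zero]
  rw [prod_neg, prod_neg, mul_pow, ← mul_assoc, ← pow_add, ← pow_mul, ← prod_pow,
    Even.neg_one_pow ⟨_, rfl⟩, Even.neg_one_pow ⟨_, mul_two _⟩]

namespace Matrix

section CommRing

variable {R : Type*} [CommRing R]

theorem det_mul_eq_sum_prod_mul_det_submatrix {m n : Type*} [Fintype m] [DecidableEq m]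
    [Fintype n] (M : Matrix m n R) (N : Matrix n m R) :
    (M * N).det = ∑ f : m → n, (∏ i, N (f i) i) * (M.submatrix id f).det := by
  simp only [det_apply', mul_apply, prod_univ_sum, Fintype.piFinset_univ, mul_sum]
  rw [sum_comm]
  refine Fintype.sum_congr _ _ fun f => Fintype.sum_congr _ _ fun σ => ?_
  simp only [submatrix_apply, id_eq, prod_mul_distrib]
  ring

theorem det_mul_eq_sum_det_submatrix_mul_det_submatrix {n : Type*} [Fintype n] [LinearOrder n]
    {k : ℕ} (M : Matrix (Fin k) n R) (N : Matrix n (Fin k) R) :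
    (M * N).det = ∑ S : {s : Finset n // s.card = k},
      (M.submatrix id (S.1.orderEmbOfFin S.2)).det *
        (N.submatrix (S.1.orderEmbOfFin S.2) id).det := by
  have hvanish : ∀ f : Fin k → n, ¬ Function.Injective f →
      (∏ i, N (f i) i) * (M.submatrix id f).det = 0 := fun f hf => by
    obtain ⟨i, j, hij, hne⟩ := Function.not_injective_iff.mp hf
    rw [det_zero_of_column_eq hne fun r => by simp [hij], mul_zero]
  rw [det_mul_eq_sum_prod_mul_det_submatrix,
    ← sum_filter_of_ne fun f _ h => by_contra fun hf => h (hvanish f hf),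
    sum_injective_eq_sum_orderEmbOfFin_comp_perm]
  refine Fintype.sum_congr _ _ fun S => ?_
  rw [det_apply' (N.submatrix _ id), mul_sum]
  refine Fintype.sum_congr _ _ fun σ => ?_
  have hcomp : M.submatrix id (S.1.orderEmbOfFin S.2 ∘ σ) =
      (M.submatrix id (S.1.orderEmbOfFin S.2)).submatrix id σ := rfl
  rw [hcomp, det_permute']
  simp only [submatrix_apply, id_eq, Function.comp_apply]
  ring

theorem det_submatrix_orderEmbOfFin {n : Type*} [Fintype n] [LinearOrder n] (M : Matrix n n R)
    (s : Finset n) {k : ℕ} (h : s.card = k) :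
    (M.submatrix (s.orderEmbOfFin h) (s.orderEmbOfFin h)).det =
      (M.submatrix (Subtype.val : s → n) Subtype.val).det := by
  have he : ⇑(s.orderEmbOfFin h) = Subtype.val ∘ s.orderIsoOfFin h := by
    funext i
    simp [coe_orderIsoOfFin_apply]
  rw [he, ← submatrix_submatrix]
  exact det_submatrix_equiv_self (s.orderIsoOfFin h).toEquiv _

theorem charpoly_coeff_eq_sum_det_submatrix_orderEmbOfFin {n : Type*} [Fintype n]
    [LinearOrder n] (M : Matrix n n R) {k : ℕ} (hk : k ≤ Fintype.card n) :
    M.charpoly.coeff (Fintype.card n - k) = (-1) ^ k * ∑ S : {s : Finset n // s.card = k},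
      (M.submatrix (S.1.orderEmbOfFin S.2) (S.1.orderEmbOfFin S.2)).det := by
  simp only [charpoly_coeff_eq_sum_minors M k hk, det_submatrix_orderEmbOfFin]
  exact congrArg _ (sum_subtype _ (fun s => mem_powersetCard_univ) _)

end CommRing

theorem sum_sq_minorOn_eq_charpoly_coeff {n k : ℕ} (A : Matrix (Fin n) (Fin n) ℝ) (hk : k ≤ n) :
    ∑ I : {s : Finset (Fin n) // s.card = k}, ∑ J : {s : Finset (Fin n) // s.card = k},
      (A.minorOn I J) ^ 2 = (-1) ^ k * (A * Aᵀ).charpoly.coeff (n - k) := by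
  have hcoeff := charpoly_coeff_eq_sum_det_submatrix_orderEmbOfFin (A * Aᵀ)
    (k := k) (by simpa using hk)
  rw [Fintype.card_fin] at hcoeff
  rw [hcoeff, ← mul_assoc, ← pow_add, Even.neg_one_pow ⟨k, rfl⟩, one_mul]
  refine Fintype.sum_congr _ _ fun I => ?_
  rw [submatrix_mul _ _ _ id _ Function.bijective_id,
    det_mul_eq_sum_det_submatrix_mul_det_submatrix]
  refine Fintype.sum_congr _ _ fun J => ?_
  rw [sq, minorOn, submatrix_submatrix, submatrix_submatrix, ← transpose_submatrix,
    det_transpose]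
  rfl

theorem IsHermitian.charpoly_pow_eq {𝕜 n : Type*} [RCLike 𝕜] [Fintype n] [DecidableEq n]
    {A : Matrix n n 𝕜} (hA : A.IsHermitian) (m : ℕ) :
    (A ^ m).charpoly = ∏ i, (X - C ((hA.eigenvalues i : 𝕜) ^ m)) := by
  conv_lhs => rw [hA.spectral_theorem, ← map_pow, diagonal_pow, Unitary.conjStarAlgAut_apply,
    charpoly_mul_comm, ← mul_assoc]
  simp [charpoly_diagonal]

end Matrix

/-- Pythagorean theorem for pseudo-determinants: if `A` is a real symmetric `n × n` matrix of
rank `k`, then the square of the coefficient of `x^{n-k}` in its characteristic polynomial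
(i.e. `Det(A)²`, the square of the product of the `k` nonzero eigenvalues) equals the sum of
the squares of all `k × k` minors of `A`. -/
theorem pdet_sq_eq_sum_sq_minors {n : ℕ} (A : Matrix (Fin n) (Fin n) ℝ) (hA : A.IsSymm)
    (k : ℕ) (hk : A.rank = k) :
    (A.charpoly.coeff (n - k)) ^ 2 =
      ∑ I : {s : Finset (Fin n) // s.card = k}, ∑ J : {s : Finset (Fin n) // s.card = k},
        (A.minorOn I J) ^ 2 := by
  have hH : A.IsHermitian := isHermitian_iff_isSymm.mpr hA
  set eig := hH.eigenvalues
  have hnonzero : #{i | eig i ≠ 0} = k := by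
    rw [← hk, hH.rank_eq_card_non_zero_eigs, Fintype.card_subtype]
  have hcard := card_filter_add_card_filter_not (s := univ) (fun i => eig i = 0)
  rw [card_univ, Fintype.card_fin, hnonzero] at hcard
  have hzeros : #{i | eig i = 0} = n - k := by omega
  have hcharpoly := hH.charpoly_pow_eq 1
  have hcharpoly_sq := hH.charpoly_pow_eq 2
  simp only [pow_one, RCLike.ofReal_real_eq_id, id] at hcharpoly hcharpoly_sq
  rw [sum_sq_minorOn_eq_charpoly_coeff A (by omega), hA.eq, ← sq, hcharpoly, hcharpoly_sq,
    ← hzeros, sq_coeff_card_zeros_prod_X_sub_C, hnonzero]
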